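/- For all α, β ∈ {1,2}, every integer n ≥ 0, and all real (v,u): Σ_{i=0}^{n} (−1)^{n−i}·( ∂θ_{α,i}/∂v · ∂θ_{β,n−i}/∂u + ∂θ_{α,i}/∂u · ∂θ_{β,n−i}/∂v ) = η_{αβ} if n = 0 and = 0 if n ≥ 1, where η_{11} = η_{22} = 0 and η_{12} = η_{21} = 1. Equivalently, as formal power series in z, ⟨∇θ_α(v,u;z), ∇θ_β(v,u;−z)⟩ = η_{αβ}, which ensures that the genus-zero two-point generating expression (1/(z+w))·( ∂_vθ_α(z)∂_uθ_β(w) + ∂_uθ_α(z)∂_vθ_β(w) − η_{αβ} ) is a well-defined power series in z and w. -/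

import Mathlib

/-!
The dispersionless Hamiltonian densities `θ_{α,p}(v,u)` of the extended Toda
hierarchy and their partial derivatives.
-/

noncomputable section Toda

/-- The harmonic number `H_m = Σ_{j=1}^m 1/j`. -/
def harm (m : ℕ) : ℝ := ∑ j ∈ Finset.Icc 1 m, (1 : ℝ) / (j : ℝ)

/-- `θ_{2,p}(v,u) = Σ_{2m ≤ p+1} e^{mu} v^{p+1−2m} / ((m!)² (p+1−2m)!)`. -/
def theta2 (p : ℕ) (v u : ℝ) : ℝ :=
  ∑ m ∈ Finset.range ((p + 1) / 2 + 1),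
    Real.exp (m * u) * v ^ (p + 1 - 2 * m) /
      ((Nat.factorial m : ℝ) ^ 2 * (Nat.factorial (p + 1 - 2 * m) : ℝ))

/-- `θ_{1,p}(v,u) = −2 Σ_{2m ≤ p} (H_m − u/2) e^{mu} v^{p−2m} / ((m!)² (p−2m)!)`. -/
def theta1 (p : ℕ) (v u : ℝ) : ℝ :=
  -2 * ∑ m ∈ Finset.range (p / 2 + 1),
    (harm m - u / 2) * Real.exp (m * u) * v ^ (p - 2 * m) /
      ((Nat.factorial m : ℝ) ^ 2 * (Nat.factorial (p - 2 * m) : ℝ))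

/-- Partial derivative in the first variable `v`. -/
def dv (f : ℝ → ℝ → ℝ) (v u : ℝ) : ℝ := deriv (fun v' => f v' u) v

/-- Partial derivative in the second variable `u`. -/
def du (f : ℝ → ℝ → ℝ) (v u : ℝ) : ℝ := deriv (fun u' => f v u') u

/-- The combined family `θ_{α,p}` (`α = 1` encoded as `0`, `α = 2` as `1`). -/
def theta (a : Fin 2) : ℕ → ℝ → ℝ → ℝ := if a = 0 then theta1 else theta2

/-- The Gram matrix `η` of the flat metric: `η_{11} = η_{22} = 0`, `η_{12} = η_{21} = 1`. -/
def eta (a b : Fin 2) : ℝ := if a = b then 0 else 1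

/-!
Put `w = e^u z²`, `A(w) = Σ wᵐ/(m!)²` and `B(w) = Σ H_m wᵐ/(m!)²`. Then
`Σ_p θ_{1,p} zᵖ = e^{vz} (u A − 2 B)` and `1 + Σ_p θ_{2,p} z^{p+1} = e^{vz} A`, so the `v`- and
`u`-derivatives are again of the form `e^{vz}·(series in z²)`, possibly times `z`. Pairing `z`
with `−z` cancels `e^{±vz}`; the diagonal cases vanish by parity in `z`, and both off-diagonal ones
reduce to the Wronskian identity `A² + 2w (B A' − A B') = 1`. It holds because `(w A')' = A` and
`(w B')' = B + A'`, so that `w (B A' − A B')` has derivative `−A A'`.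
-/

open PowerSeries

namespace PowerSeries

variable {R : Type*} [CommRing R]

theorem coeff_mul_rescale_neg_one (f g : R⟦X⟧) (n : ℕ) :
    coeff n (f * rescale (-1) g)
      = ∑ i ∈ Finset.range (n + 1), (-1 : R) ^ (n - i) * (coeff i f * coeff (n - i) g) := by
  rw [coeff_mul, Finset.Nat.sum_antidiagonal_eq_sum_range_succ_mk]
  refine Finset.sum_congr rfl fun i _ => ?_
  rw [coeff_rescale]
  ring

theorem rescale_C (a r : R) : rescale a (C r) = C r := by
  ext n
  rw [coeff_rescale, coeff_C]
  split_ifs with h <;> simp [h]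

theorem rescale_neg_one_expand_two (f : R⟦X⟧) :
    rescale (-1) (expand 2 two_ne_zero f) = expand 2 two_ne_zero f := by
  ext n
  rw [coeff_rescale, coeff_expand]
  split_ifs with h
  · rw [Even.neg_one_pow (even_iff_two_dvd.mpr h), one_mul]
  · rw [mul_zero]

theorem coeff_mul_expand (f g : R⟦X⟧) {p : ℕ} (hp : p ≠ 0) (n : ℕ) :
    coeff n (f * expand p hp g)
      = ∑ m ∈ Finset.range (n / p + 1), coeff (n - p * m) f * coeff m g := by
  have hdvd : (Finset.range (n + 1)).filter (p ∣ ·)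
      = (Finset.range (n / p + 1)).map ⟨(p * ·), mul_right_injective₀ hp⟩ := by
    ext k
    simp only [Finset.mem_filter, Finset.mem_range, Finset.mem_map, Function.Embedding.coeFn_mk]
    constructor
    · rintro ⟨hk, m, rfl⟩
      exact ⟨m, Nat.lt_succ_of_le ((Nat.le_div_iff_mul_le (Nat.pos_of_ne_zero hp)).mpr
        (by rw [mul_comm]; omega)), rfl⟩
    · rintro ⟨m, hm, rfl⟩
      refine ⟨?_, dvd_mul_right p m⟩
      have := (Nat.le_div_iff_mul_le (Nat.pos_of_ne_zero hp)).mp (Nat.lt_succ_iff.mp hm)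
      rw [mul_comm]
      omega
  rw [coeff_mul, ← Finset.Nat.sum_antidiagonal_swap]
  simp only [Prod.fst_swap, Prod.snd_swap]
  rw [Finset.Nat.sum_antidiagonal_eq_sum_range_succ
    (fun i j => coeff j f * coeff i (expand p hp g))]
  simp only [coeff_expand, mul_ite, mul_zero]
  rw [← Finset.sum_filter, hdvd, Finset.sum_map]
  simp [Nat.mul_div_cancel_left _ (Nat.pos_of_ne_zero hp)]

theorem rescale_exp_mul_rescale_neg_exp [Algebra ℚ R] (a : R) :
    rescale a (exp R) * rescale (-a) (exp R) = 1 := by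
  simp [exp_mul_exp_eq_exp_add]

theorem sq_add_two_mul_X_mul_wronskian [IsAddTorsionFree R] {f g : R⟦X⟧}
    (hf : d⁄dX R (X * d⁄dX R f) = f) (hg : d⁄dX R (X * d⁄dX R g) = g + d⁄dX R f) :
    f ^ 2 + 2 * X * (g * d⁄dX R f - f * d⁄dX R g) = C (constantCoeff f ^ 2) := by
  have hW : d⁄dX R (g * (X * d⁄dX R f) - f * (X * d⁄dX R g)) = -(f * d⁄dX R f) := by
    simp only [map_sub, Derivation.leibniz, hf, hg, smul_eq_mul]
    ring
  apply derivative.ext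
  · have hsplit : f ^ 2 + 2 * X * (g * d⁄dX R f - f * d⁄dX R g)
        = f ^ 2 + 2 * (g * (X * d⁄dX R f) - f * (X * d⁄dX R g)) := by ring
    have h2 : d⁄dX R (2 : R⟦X⟧) = 0 := by exact_mod_cast Derivation.map_natCast _ 2
    rw [hsplit, map_add, Derivation.leibniz_pow, Derivation.leibniz, hW, h2, derivative_C]
    simp only [smul_eq_mul, nsmul_eq_mul]
    ring
  · simp

end PowerSeries

section CoeffDeriv

variable {𝕜 : Type*} [NontriviallyNormedField 𝕜]

def HasCoeffDerivAt (F : 𝕜 → 𝕜⟦X⟧) (F' : 𝕜⟦X⟧) (t : 𝕜) : Prop :=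
  ∀ n, HasDerivAt (fun s => coeff n (F s)) (coeff n F') t

variable {F G : 𝕜 → 𝕜⟦X⟧} {F' G' : 𝕜⟦X⟧} {t : 𝕜}

theorem hasCoeffDerivAt_const (f : 𝕜⟦X⟧) : HasCoeffDerivAt (fun _ => f) 0 t := fun n => by
  simpa using hasDerivAt_const t (coeff n f)

theorem hasCoeffDerivAt_C : HasCoeffDerivAt (fun s => C s) 1 t := fun n => by
  rcases n with _ | n
  · simpa using hasDerivAt_id' t
  · simpa using hasDerivAt_const t (0 : 𝕜)

theorem HasCoeffDerivAt.sub (hF : HasCoeffDerivAt F F' t) (hG : HasCoeffDerivAt G G' t) :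
    HasCoeffDerivAt (fun s => F s - G s) (F' - G') t := fun n => by
  simp only [map_sub]
  exact (hF n).sub (hG n)

theorem HasCoeffDerivAt.mul (hF : HasCoeffDerivAt F F' t) (hG : HasCoeffDerivAt G G' t) :
    HasCoeffDerivAt (fun s => F s * G s) (F' * G t + F t * G') t := fun n => by
  simp only [coeff_mul, map_add, ← Finset.sum_add_distrib]
  exact HasDerivAt.fun_sum fun ij _ => (hF ij.1).mul (hG ij.2)

theorem HasCoeffDerivAt.expand {p : ℕ} (hp : p ≠ 0) (hF : HasCoeffDerivAt F F' t) :
    HasCoeffDerivAt (fun s => expand p hp (F s)) (expand p hp F') t := fun n => by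
  simp only [coeff_expand]
  split_ifs
  exacts [hF _, hasDerivAt_const t 0]

theorem HasCoeffDerivAt.comp {g : 𝕜 → 𝕜} {g' : 𝕜} (hF : HasCoeffDerivAt F F' (g t))
    (hg : HasDerivAt g g' t) : HasCoeffDerivAt (fun s => F (g s)) (C g' * F') t := fun n => by
  rw [coeff_C_mul, mul_comm]
  exact (hF n).comp t hg

theorem hasCoeffDerivAt_rescale (f : 𝕜⟦X⟧) :
    HasCoeffDerivAt (fun s => rescale s f) (X * rescale t (d⁄dX 𝕜 f)) t := fun n => by
  simp only [coeff_rescale]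
  rcases n with _ | n
  · simpa using hasDerivAt_const t (coeff 0 f)
  · rw [coeff_succ_X_mul, coeff_rescale, coeff_derivative]
    refine ((hasDerivAt_pow (n + 1) t).mul_const (coeff (n + 1) f)).congr_deriv ?_
    push_cast
    ring

end CoeffDeriv

theorem hasCoeffDerivAt_rescale_exp_mul (G : ℝ⟦X⟧) (t : ℝ) :
    HasCoeffDerivAt (fun s => rescale s (exp ℝ) * G) (X * (rescale t (exp ℝ) * G)) t := by
  simpa [derivative_exp, mul_assoc] using
    (hasCoeffDerivAt_rescale (exp ℝ)).mul (hasCoeffDerivAt_const G)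

theorem hasCoeffDerivAt_rescale_exp (f : ℝ⟦X⟧) (t : ℝ) :
    HasCoeffDerivAt (fun s => rescale (Real.exp s) f)
      (C (Real.exp t) * X * rescale (Real.exp t) (d⁄dX ℝ f)) t := by
  simpa [mul_assoc] using (hasCoeffDerivAt_rescale f).comp (Real.hasDerivAt_exp t)

theorem harm_succ (m : ℕ) : harm (m + 1) = harm m + 1 / (m + 1 : ℝ) := by
  rw [harm, Finset.sum_Icc_succ_top (by omega), harm]
  push_cast
  rfl

-- `besselSeries` is `I₀(2√w)`, and `K₀(2√w) = -(log w / 2 + γ) I₀(2√w) + harmonicBesselSeries`.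
def besselSeries : ℝ⟦X⟧ := mk fun m => ((m.factorial : ℝ) ^ 2)⁻¹

def harmonicBesselSeries : ℝ⟦X⟧ := mk fun m => harm m / (m.factorial : ℝ) ^ 2

theorem derivative_X_mul_derivative_besselSeries :
    d⁄dX ℝ (X * d⁄dX ℝ besselSeries) = besselSeries := by
  ext n
  rw [coeff_derivative, coeff_succ_X_mul, coeff_derivative, besselSeries, coeff_mk, coeff_mk,
    Nat.factorial_succ]
  push_cast
  field_simp

theorem derivative_X_mul_derivative_harmonicBesselSeries :
    d⁄dX ℝ (X * d⁄dX ℝ harmonicBesselSeries) = harmonicBesselSeries + d⁄dX ℝ besselSeries := by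
  ext n
  rw [coeff_derivative, coeff_succ_X_mul, coeff_derivative, map_add, coeff_derivative,
    harmonicBesselSeries, besselSeries, coeff_mk, coeff_mk, coeff_mk, harm_succ,
    Nat.factorial_succ]
  push_cast
  field_simp

theorem besselSeries_wronskian :
    besselSeries ^ 2 + 2 * X * (harmonicBesselSeries * d⁄dX ℝ besselSeries
      - besselSeries * d⁄dX ℝ harmonicBesselSeries) = 1 := by
  rw [sq_add_two_mul_X_mul_wronskian derivative_X_mul_derivative_besselSeries
    derivative_X_mul_derivative_harmonicBesselSeries]
  simp [besselSeries]

def thetaSeries1 (v u : ℝ) : ℝ⟦X⟧ :=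
  rescale v (exp ℝ) * expand 2 two_ne_zero
    (C u * rescale (Real.exp u) besselSeries - 2 * rescale (Real.exp u) harmonicBesselSeries)

def thetaSeries2 (v u : ℝ) : ℝ⟦X⟧ :=
  rescale v (exp ℝ) * expand 2 two_ne_zero (rescale (Real.exp u) besselSeries)

theorem theta1_eq_coeff (p : ℕ) (v u : ℝ) : theta1 p v u = coeff p (thetaSeries1 v u) := by
  rw [thetaSeries1, ← map_ofNat C 2, coeff_mul_expand, theta1, Finset.mul_sum]
  refine Finset.sum_congr rfl fun m _ => ?_
  rw [map_sub, coeff_C_mul, coeff_C_mul]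
  simp [coeff_rescale, coeff_exp, besselSeries, harmonicBesselSeries, Real.exp_nat_mul]
  field_simp
  ring

theorem theta2_eq_coeff (p : ℕ) (v u : ℝ) : theta2 p v u = coeff (p + 1) (thetaSeries2 v u) := by
  rw [thetaSeries2, coeff_mul_expand, theta2]
  refine Finset.sum_congr rfl fun m _ => ?_
  simp [coeff_rescale, coeff_exp, besselSeries, Real.exp_nat_mul]
  field_simp

def gradVTheta (v u : ℝ) : Fin 2 → ℝ⟦X⟧ := ![X * thetaSeries1 v u, thetaSeries2 v u]

def gradUTheta (v u : ℝ) : Fin 2 → ℝ⟦X⟧ :=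
  ![rescale v (exp ℝ) * expand 2 two_ne_zero
      (rescale (Real.exp u) besselSeries + C (Real.exp u) * X *
        (C u * rescale (Real.exp u) (d⁄dX ℝ besselSeries)
          - 2 * rescale (Real.exp u) (d⁄dX ℝ harmonicBesselSeries))),
    C (Real.exp u) * X * rescale v (exp ℝ) *
      expand 2 two_ne_zero (rescale (Real.exp u) (d⁄dX ℝ besselSeries))]

theorem dv_theta1_eq_coeff (p : ℕ) (v u : ℝ) :
    dv (theta1 p) v u = coeff p (gradVTheta v u 0) := by
  simp only [dv, theta1_eq_coeff, thetaSeries1, gradVTheta, Matrix.cons_val_zero]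
  exact (hasCoeffDerivAt_rescale_exp_mul _ v p).deriv

theorem dv_theta2_eq_coeff (p : ℕ) (v u : ℝ) :
    dv (theta2 p) v u = coeff p (gradVTheta v u 1) := by
  simp only [dv, theta2_eq_coeff, thetaSeries2, gradVTheta, Matrix.cons_val_one,
    Matrix.cons_val_fin_one]
  rw [(hasCoeffDerivAt_rescale_exp_mul _ v (p + 1)).deriv, coeff_succ_X_mul]

theorem du_theta1_eq_coeff (p : ℕ) (v u : ℝ) :
    du (theta1 p) v u = coeff p (gradUTheta v u 0) := by
  have h := (hasCoeffDerivAt_const (rescale v (exp ℝ))).mul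
    (((hasCoeffDerivAt_C.mul (hasCoeffDerivAt_rescale_exp besselSeries u)).sub
      ((hasCoeffDerivAt_const 2).mul (hasCoeffDerivAt_rescale_exp harmonicBesselSeries u))).expand
        two_ne_zero)
  simp only [du, theta1_eq_coeff, thetaSeries1, gradUTheta, Matrix.cons_val_zero]
  rw [(h p).deriv, zero_mul, zero_add]
  congr 3
  ring

theorem du_theta2_eq_coeff (p : ℕ) (v u : ℝ) :
    du (theta2 p) v u = coeff p (gradUTheta v u 1) := by
  have h := (hasCoeffDerivAt_const (rescale v (exp ℝ))).mul
    ((hasCoeffDerivAt_rescale_exp besselSeries u).expand two_ne_zero)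
  simp only [du, theta2_eq_coeff, thetaSeries2, gradUTheta, Matrix.cons_val_one,
    Matrix.cons_val_fin_one]
  rw [(h (p + 1)).deriv, ← coeff_succ_X_mul p]
  congr 1
  simp only [zero_mul, zero_add, map_mul, expand_C, expand_X]
  ring

theorem dv_theta_eq_coeff (a : Fin 2) (p : ℕ) (v u : ℝ) :
    dv (theta a p) v u = coeff p (gradVTheta v u a) := by
  fin_cases a
  exacts [dv_theta1_eq_coeff p v u, dv_theta2_eq_coeff p v u]

theorem du_theta_eq_coeff (a : Fin 2) (p : ℕ) (v u : ℝ) :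
    du (theta a p) v u = coeff p (gradUTheta v u a) := by
  fin_cases a
  exacts [du_theta1_eq_coeff p v u, du_theta2_eq_coeff p v u]

theorem gradTheta_pairing (a b : Fin 2) (v u : ℝ) :
    gradVTheta v u a * rescale (-1) (gradUTheta v u b)
      + gradUTheta v u a * rescale (-1) (gradVTheta v u b) = C (eta a b) := by
  have hE := rescale_exp_mul_rescale_neg_exp v
  have hW := congrArg (fun f => expand 2 two_ne_zero (rescale (Real.exp u) f))
    besselSeries_wronskian
  simp only [map_add, map_sub, map_mul, map_pow, map_one, map_ofNat, rescale_X, expand_X,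
    expand_C] at hW
  fin_cases a <;> fin_cases b <;>
    simp [gradVTheta, gradUTheta, thetaSeries1, thetaSeries2, eta, rescale_C,
      rescale_neg_one_expand_two, rescale_rescale, expand_C,
      map_ofNat (expand 2 two_ne_zero) 2, map_ofNat (rescale (-1 : ℝ)) 2]
  · ring
  · linear_combination rescale v (exp ℝ) * rescale (-v) (exp ℝ) * hW + hE
  · linear_combination rescale v (exp ℝ) * rescale (-v) (exp ℝ) * hW + hE
  · ring

/-- Pairing of the gradients of the generating series `θ_α(z)` and `θ_β(−z)` gives `η_{αβ}`:
`Σ_{i=0}^n (−1)^{n−i} (∂_vθ_{α,i} ∂_uθ_{β,n−i} + ∂_uθ_{α,i} ∂_vθ_{β,n−i})` equals `η_{αβ}`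
for `n = 0` and `0` for `n ≥ 1`. -/
theorem theta_gradient_pairing (a b : Fin 2) (n : ℕ) (v u : ℝ) :
    ∑ i ∈ Finset.range (n + 1), (-1 : ℝ) ^ (n - i) *
        (dv (theta a i) v u * du (theta b (n - i)) v u
          + du (theta a i) v u * dv (theta b (n - i)) v u)
      = if n = 0 then eta a b else 0 := by
  simp only [dv_theta_eq_coeff, du_theta_eq_coeff, mul_add, Finset.sum_add_distrib,
    ← coeff_mul_rescale_neg_one, ← map_add, gradTheta_pairing, coeff_C]

end Toda
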